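/- arXiv:2505.12178 — 2 statements merged into one kernel-verified Lean document; each statement's English description precedes it below -/
import Mathlib

section
/- For any integer n ≥ 2 and any x = (x_1, …, x_n) with 0 < x_i < 1 for every i ∈ [n], the sum of the partial derivatives of f_n at x is strictly negative, i.e., ∑_{i=1}^n ∂f_n/∂x_i (x) < 0; in particular, f_n has no critical points in the open region (0, 1)^n. -/
open Finset

/-- The `k`-th elementary symmetric polynomial `e_k(x)` in `n` variables. -/
noncomputable def Efun (n : ℕ) (k : ℕ) (x : Fin n → ℝ) : ℝ :=
  ∑ S ∈ (Finset.univ : Finset (Fin n)).powersetCard k, ∏ i ∈ S, x i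

/-- `L_n(x) = (1/n!) ∑_{k=0}^n c_{n-k} e_k(x)`, where `c_j = numDerangements j`. -/
noncomputable def Lfun (n : ℕ) (x : Fin n → ℝ) : ℝ :=
  (1 / (n.factorial : ℝ)) *
    ∑ k ∈ Finset.range (n + 1), (numDerangements (n - k) : ℝ) * Efun n k x

/-- `R_n(x) = (1/C(n,2)) ∑_{i<j} √(x_i x_j)`. -/
noncomputable def Rfun (n : ℕ) (x : Fin n → ℝ) : ℝ :=
  (1 / (n.choose 2 : ℝ)) *
    ∑ S ∈ (Finset.univ : Finset (Fin n)).powersetCard 2, Real.sqrt (∏ i ∈ S, x i)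

/-- `f_n(x) = L_n(x) - R_n(x)`. -/
noncomputable def ffun (n : ℕ) (x : Fin n → ℝ) : ℝ := Lfun n x - Rfun n x


lemma TU (N : ℕ) :
    ((∑ k ∈ range (N+1), (N.choose k : ℤ) * numDerangements k) = N.factorial) ∧
    ((∑ k ∈ range (N+1), (N.choose k : ℤ) * numDerangements (k+1)) = N * N.factorial) := by
  induction N with
  | zero => simp
  | succ N ih =>
    obtain ⟨hT, hU⟩ := ih
    have pascal : ∀ k : ℕ, ((N+1).choose (k+1) : ℤ) = N.choose k + N.choose (k+1) := by
      intro k; exact_mod_cast Nat.choose_succ_succ N k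
    have hT' : (∑ k ∈ range (N+2), ((N+1).choose k : ℤ) * numDerangements k)
        = (N+1).factorial := by
      rw [Finset.sum_range_succ']
      have : ∀ k ∈ range (N+1), ((N+1).choose (k+1) : ℤ) * numDerangements (k+1)
          = (N.choose k : ℤ) * numDerangements (k+1)
            + (N.choose (k+1) : ℤ) * numDerangements (k+1) := by
        intro k _; rw [pascal]; ring
      rw [Finset.sum_congr rfl this, Finset.sum_add_distrib, hU]
      have : (∑ k ∈ range (N+1), (N.choose (k+1) : ℤ) * numDerangements (k+1))
          + ((N+1).choose 0 : ℤ) * numDerangements 0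
          = ∑ k ∈ range (N+2), (N.choose k : ℤ) * numDerangements k := by
        conv_rhs => rw [Finset.sum_range_succ']
        simp
      rw [add_assoc, this, Finset.sum_range_succ, Nat.choose_succ_self]
      push_cast [hT, Nat.factorial_succ]
      ring
    refine ⟨hT', ?_⟩
    have hd : ∀ k : ℕ, (numDerangements (k+1) : ℤ) = (k+1) * numDerangements k - (-1)^k :=
      numDerangements_succ
    have e1 : (∑ k ∈ range (N+2), ((N+1).choose k : ℤ) * numDerangements (k+1))
        = (∑ k ∈ range (N+2), ((k:ℤ)+1) * ((N+1).choose k : ℤ) * numDerangements k)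
          - ∑ k ∈ range (N+2), (-1:ℤ)^k * ((N+1).choose k) := by
      rw [← Finset.sum_sub_distrib]
      refine Finset.sum_congr rfl fun k _ => ?_
      rw [hd]; ring
    have e2 : (∑ k ∈ range (N+2), (-1:ℤ)^k * ((N+1).choose k)) = 0 := by
      rw [Int.alternating_sum_range_choose]; simp
    have e3 : (∑ k ∈ range (N+2), ((k:ℤ)+1) * ((N+1).choose k : ℤ) * numDerangements k)
        = (∑ k ∈ range (N+2), (k:ℤ) * ((N+1).choose k : ℤ) * numDerangements k)
          + ∑ k ∈ range (N+2), ((N+1).choose k : ℤ) * numDerangements k := by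
      rw [← Finset.sum_add_distrib]
      exact Finset.sum_congr rfl fun k _ => by ring
    have e4 : (∑ k ∈ range (N+2), (k:ℤ) * ((N+1).choose k : ℤ) * numDerangements k)
        = (N+1) * ∑ k ∈ range (N+1), (N.choose k : ℤ) * numDerangements (k+1) := by
      rw [Finset.sum_range_succ']
      simp only [Nat.cast_zero, zero_mul, add_zero, Finset.mul_sum]
      refine Finset.sum_congr rfl fun k _ => ?_
      have h2 : ((k:ℤ)+1) * ((N+1).choose (k+1) : ℤ) = ((N:ℤ)+1) * (N.choose k : ℤ) := by
        have h3 : (N+1) * N.choose k = (N+1).choose (k+1) * (k+1) := Nat.add_one_mul_choose_eq N k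
        have h4 : ((N:ℤ)+1) * (N.choose k : ℤ) = ((N+1).choose (k+1) : ℤ) * ((k:ℤ)+1) := by
          exact_mod_cast h3
        rw [h4]; ring
      push_cast
      calc ((k:ℤ)+1) * ((N+1).choose (k+1) : ℤ) * numDerangements (k+1)
          = (((k:ℤ)+1) * ((N+1).choose (k+1) : ℤ)) * numDerangements (k+1) := by ring
        _ = (((N:ℤ)+1) * (N.choose k : ℤ)) * numDerangements (k+1) := by rw [h2]
        _ = ((N:ℤ)+1) * ((N.choose k : ℤ) * numDerangements (k+1)) := by ring
    rw [e1, e2, e3, e4, hU, hT']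
    push_cast [Nat.factorial_succ]
    ring

lemma Tsym (m : ℕ) :
    (∑ k ∈ range (m+1), (m.choose k : ℤ) * numDerangements (m - k)) = m.factorial := by
  have h := (TU m).1
  rw [← Finset.sum_range_reflect] at h
  rw [← h]
  refine Finset.sum_congr rfl fun j hj => ?_
  have hj' : j ≤ m := Nat.lt_succ_iff.mp (Finset.mem_range.mp hj)
  rw [Nat.add_sub_cancel, Nat.choose_symm hj']

lemma key_id (m : ℕ) :
    (∑ k ∈ range (m+2), (numDerangements (m+1-k) : ℝ) * (k * (m+1).choose k))
      = (m+1).factorial := by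
  have base : (∑ k ∈ range (m+1), ((m.choose k : ℝ)) * numDerangements (m - k)) = m.factorial := by
    exact_mod_cast Tsym m
  rw [Finset.sum_range_succ']
  simp only [Nat.cast_zero, zero_mul, mul_zero, add_zero]
  have hterm : ∀ k ∈ range (m+1),
      (numDerangements (m+1-(k+1)) : ℝ) * ((k+1 : ℕ) * ((m+1).choose (k+1)))
      = ((m:ℝ)+1) * ((m.choose k : ℝ) * numDerangements (m - k)) := by
    intro k _
    have h3 : (m+1) * m.choose k = (m+1).choose (k+1) * (k+1) := Nat.add_one_mul_choose_eq m k
    have h4 : ((m:ℝ)+1) * (m.choose k : ℝ) = ((m+1).choose (k+1) : ℝ) * ((k:ℝ)+1) := by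
      exact_mod_cast h3
    have h5 : m + 1 - (k+1) = m - k := by omega
    rw [h5]
    push_cast
    nlinarith [h4]
  rw [Finset.sum_congr rfl hterm, ← Finset.mul_sum, base]
  push_cast [Nat.factorial_succ]
  ring

lemma hasDerivAt_prod_update {n : ℕ} (x : Fin n → ℝ) (i : Fin n) (S : Finset (Fin n)) :
    HasDerivAt (fun t => ∏ j ∈ S, Function.update x i t j)
      (if i ∈ S then ∏ j ∈ S.erase i, x j else 0) (x i) := by
  by_cases hi : i ∈ S
  · simp only [hi, if_true]
    have funeq : (fun t => ∏ j ∈ S, Function.update x i t j)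
        = fun t => t * ∏ j ∈ S.erase i, x j := by
      funext t
      rw [← Finset.mul_prod_erase S _ hi, Function.update_self]
      congr 1
      exact Finset.prod_congr rfl fun j hj =>
        Function.update_of_ne (Finset.ne_of_mem_erase hj) _ _
    rw [funeq]
    simpa using (hasDerivAt_id (x i)).mul_const (∏ j ∈ S.erase i, x j)
  · simp only [hi, if_false]
    have funeq : (fun t => ∏ j ∈ S, Function.update x i t j) = fun _ => ∏ j ∈ S, x j := by
      funext t
      exact Finset.prod_congr rfl fun j hj =>
        Function.update_of_ne (by rintro rfl; exact hi hj) _ _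
    rw [funeq]; exact hasDerivAt_const _ _

lemma hasDerivAt_sqrt_update {n : ℕ} (x : Fin n → ℝ) (hx : ∀ i, 0 < x i)
    (i : Fin n) (S : Finset (Fin n)) :
    HasDerivAt (fun t => Real.sqrt (∏ j ∈ S, Function.update x i t j))
      (if i ∈ S then (∏ j ∈ S.erase i, x j) /
        (2 * Real.sqrt (x i * ∏ j ∈ S.erase i, x j)) else 0) (x i) := by
  by_cases hi : i ∈ S
  · simp only [hi, if_true]
    set C := ∏ j ∈ S.erase i, x j with hC
    have hCpos : 0 < C := Finset.prod_pos fun j _ => hx j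
    have funeq : (fun t => Real.sqrt (∏ j ∈ S, Function.update x i t j))
        = fun t => Real.sqrt (t * C) := by
      funext t
      congr 1
      rw [← Finset.mul_prod_erase S _ hi, Function.update_self]
      congr 1
      exact Finset.prod_congr rfl fun j hj =>
        Function.update_of_ne (Finset.ne_of_mem_erase hj) _ _
    rw [funeq]
    have h1 : HasDerivAt (fun t : ℝ => t * C) (1 * C) (x i) :=
      (hasDerivAt_id (x i)).mul_const C
    have hne : (x i) * C ≠ 0 := ne_of_gt (mul_pos (hx i) hCpos)
    have h2 := (Real.hasDerivAt_sqrt hne).comp (x i) h1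
    exact h2.congr_deriv (by ring)
  · simp only [hi, if_false]
    have funeq : (fun t => Real.sqrt (∏ j ∈ S, Function.update x i t j))
        = fun _ => Real.sqrt (∏ j ∈ S, x j) := by
      funext t
      congr 1
      exact Finset.prod_congr rfl fun j hj =>
        Function.update_of_ne (by rintro rfl; exact hi hj) _ _
    rw [funeq]; exact hasDerivAt_const _ _

theorem no_critical_points_below_one (n : ℕ) (hn : 2 ≤ n) (x : Fin n → ℝ)
    (hx : ∀ i, 0 < x i ∧ x i < 1) :
    ∃ d : Fin n → ℝ,
      (∀ i, HasDerivAt (fun t => ffun n (Function.update x i t)) (d i) (x i)) ∧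
      (∑ i, d i) < 0 := by
  have hxpos : ∀ i, 0 < x i := fun i => (hx i).1
  set dL : Fin n → ℝ := fun i =>
    (1 / (n.factorial : ℝ)) * ∑ k ∈ range (n+1), (numDerangements (n-k) : ℝ) *
      (∑ S ∈ (univ : Finset (Fin n)).powersetCard k,
        if i ∈ S then ∏ j ∈ S.erase i, x j else 0) with hdL
  set dR : Fin n → ℝ := fun i =>
    (1 / (n.choose 2 : ℝ)) * ∑ S ∈ (univ : Finset (Fin n)).powersetCard 2,
      if i ∈ S then (∏ j ∈ S.erase i, x j) /
        (2 * Real.sqrt (x i * ∏ j ∈ S.erase i, x j)) else 0 with hdR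
  refine ⟨fun i => dL i - dR i, fun i => ?_, ?_⟩
  · have hL : HasDerivAt (fun t => Lfun n (Function.update x i t)) (dL i) (x i) := by
      simp only [Lfun, Efun]
      exact HasDerivAt.const_mul _ (HasDerivAt.fun_sum fun k _ =>
        HasDerivAt.const_mul _ (HasDerivAt.fun_sum fun S _ => hasDerivAt_prod_update x i S))
    have hR : HasDerivAt (fun t => Rfun n (Function.update x i t)) (dR i) (x i) := by
      simp only [Rfun]
      exact HasDerivAt.const_mul _ (HasDerivAt.fun_sum fun S _ =>
        hasDerivAt_sqrt_update x hxpos i S)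
    exact hL.sub hR
  -- now the sum estimate
  have hswap : ∀ (k : ℕ) (g : Fin n → Finset (Fin n) → ℝ),
      (∑ i, ∑ S ∈ (univ : Finset (Fin n)).powersetCard k,
        (if i ∈ S then g i S else 0))
      = ∑ S ∈ (univ : Finset (Fin n)).powersetCard k, ∑ i ∈ S, g i S := by
    intro k g
    rw [Finset.sum_comm]
    refine Finset.sum_congr rfl fun S _ => ?_
    rw [Finset.sum_ite_mem, Finset.univ_inter]
  have hsplit : (∑ i, (dL i - dR i)) = (∑ i, dL i) - (∑ i, dR i) :=
    Finset.sum_sub_distrib _ _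
  -- L part
  have hSL : (∑ i, dL i) < 1 := by
    have e1 : (∑ i, dL i) = (1 / (n.factorial : ℝ)) *
        ∑ k ∈ range (n+1), (numDerangements (n-k) : ℝ) *
          (∑ S ∈ (univ : Finset (Fin n)).powersetCard k, ∑ i ∈ S,
            ∏ j ∈ S.erase i, x j) := by
      rw [hdL, ← Finset.mul_sum, Finset.sum_comm]
      congr 1
      refine Finset.sum_congr rfl fun k _ => ?_
      rw [← Finset.mul_sum, hswap k (fun i S => ∏ j ∈ S.erase i, x j)]
    have hTle : ∀ k ∈ range (n+1),
        (numDerangements (n-k) : ℝ) *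
          (∑ S ∈ (univ : Finset (Fin n)).powersetCard k, ∑ i ∈ S, ∏ j ∈ S.erase i, x j)
        ≤ (numDerangements (n-k) : ℝ) * (k * n.choose k) := by
      intro k _
      refine mul_le_mul_of_nonneg_left ?_ (Nat.cast_nonneg _)
      have : ∀ S ∈ (univ : Finset (Fin n)).powersetCard k,
          (∑ i ∈ S, ∏ j ∈ S.erase i, x j) ≤ (k : ℝ) := by
        intro S hS
        have hcard : S.card = k := (Finset.mem_powersetCard.mp hS).2
        calc (∑ i ∈ S, ∏ j ∈ S.erase i, x j) ≤ ∑ _i ∈ S, (1:ℝ) :=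
              Finset.sum_le_sum fun i _ =>
                Finset.prod_le_one (fun j _ => (hx j).1.le) (fun j _ => (hx j).2.le)
          _ = (k : ℝ) := by rw [Finset.sum_const, hcard]; simp
      calc (∑ S ∈ (univ : Finset (Fin n)).powersetCard k, ∑ i ∈ S, ∏ j ∈ S.erase i, x j)
          ≤ ∑ _S ∈ (univ : Finset (Fin n)).powersetCard k, (k:ℝ) := Finset.sum_le_sum this
        _ = (k : ℝ) * n.choose k := by
            rw [Finset.sum_const, Finset.card_powersetCard, Finset.card_univ,
              Fintype.card_fin, nsmul_eq_mul, mul_comm]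
    have hTn : (numDerangements (n-n) : ℝ) *
          (∑ S ∈ (univ : Finset (Fin n)).powersetCard n, ∑ i ∈ S, ∏ j ∈ S.erase i, x j)
        < (numDerangements (n-n) : ℝ) * (n * n.choose n) := by
      simp only [Nat.sub_self, numDerangements_zero, Nat.cast_one, one_mul, Nat.choose_self,
        Nat.cast_one, mul_one]
      have huniv : (univ : Finset (Fin n)).powersetCard n = {univ} := by
        simpa using Finset.powersetCard_self (univ : Finset (Fin n))
      rw [huniv, Finset.sum_singleton]
      have : Nonempty (Fin n) := ⟨⟨0, by omega⟩⟩
      have hne : (univ : Finset (Fin n)).Nonempty := Finset.univ_nonempty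
      have hlt : ∀ i ∈ (univ : Finset (Fin n)),
          (∏ j ∈ (univ : Finset (Fin n)).erase i, x j) < 1 := by
        intro i _
        obtain ⟨j0, hj0⟩ := Fintype.exists_ne_of_one_lt_card (by rw [Fintype.card_fin]; omega) i
        have hj0m : j0 ∈ (univ : Finset (Fin n)).erase i :=
          Finset.mem_erase.mpr ⟨hj0, Finset.mem_univ _⟩
        calc (∏ j ∈ (univ : Finset (Fin n)).erase i, x j)
            = x j0 * ∏ j ∈ ((univ : Finset (Fin n)).erase i).erase j0, x j :=
              (Finset.mul_prod_erase _ _ hj0m).symm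
          _ ≤ x j0 * 1 := by
              refine mul_le_mul_of_nonneg_left ?_ (hxpos j0).le
              exact Finset.prod_le_one (fun j _ => (hx j).1.le) (fun j _ => (hx j).2.le)
          _ < 1 := by rw [mul_one]; exact (hx j0).2
      calc (∑ i ∈ (univ : Finset (Fin n)), ∏ j ∈ (univ : Finset (Fin n)).erase i, x j)
          < ∑ _i ∈ (univ : Finset (Fin n)), (1:ℝ) :=
            Finset.sum_lt_sum_of_nonempty hne hlt
        _ = n := by simp
    have hsum_lt : (∑ k ∈ range (n+1), (numDerangements (n-k) : ℝ) *
          (∑ S ∈ (univ : Finset (Fin n)).powersetCard k, ∑ i ∈ S, ∏ j ∈ S.erase i, x j))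
        < ∑ k ∈ range (n+1), (numDerangements (n-k) : ℝ) * (k * n.choose k) :=
      Finset.sum_lt_sum hTle ⟨n, Finset.self_mem_range_succ n, hTn⟩
    have hid : (∑ k ∈ range (n+1), (numDerangements (n-k) : ℝ) * (k * n.choose k))
        = n.factorial := by
      obtain ⟨m, rfl⟩ : ∃ m, n = m + 1 := ⟨n - 1, by omega⟩
      exact key_id m
    rw [e1]
    have hfacpos : (0:ℝ) < n.factorial := by exact_mod_cast n.factorial_pos
    calc (1 / (n.factorial : ℝ)) * _ < (1 / (n.factorial : ℝ)) * (n.factorial : ℝ) := by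
          refine mul_lt_mul_of_pos_left ?_ (by positivity)
          exact lt_of_lt_of_eq hsum_lt hid
      _ = 1 := by field_simp
  -- R part
  have hSR : (1:ℝ) ≤ ∑ i, dR i := by
    have echoose : (0:ℝ) < n.choose 2 := by
      exact_mod_cast Nat.choose_pos hn
    have e2 : (∑ i, dR i) = (1 / (n.choose 2 : ℝ)) *
        ∑ S ∈ (univ : Finset (Fin n)).powersetCard 2, ∑ i ∈ S,
          (∏ j ∈ S.erase i, x j) / (2 * Real.sqrt (x i * ∏ j ∈ S.erase i, x j)) := by
      rw [hdR, ← Finset.mul_sum,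
        hswap 2 (fun i S => (∏ j ∈ S.erase i, x j) /
          (2 * Real.sqrt (x i * ∏ j ∈ S.erase i, x j)))]
    have hpair : ∀ S ∈ (univ : Finset (Fin n)).powersetCard 2,
        (1:ℝ) ≤ ∑ i ∈ S,
          (∏ j ∈ S.erase i, x j) / (2 * Real.sqrt (x i * ∏ j ∈ S.erase i, x j)) := by
      intro S hS
      have hcard : S.card = 2 := (Finset.mem_powersetCard.mp hS).2
      obtain ⟨a, b, hab, rfl⟩ := Finset.card_eq_two.mp hcard
      have hea : ({a, b} : Finset (Fin n)).erase a = {b} := by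
        rw [Finset.erase_insert (by simp [hab])]
      have heb : ({a, b} : Finset (Fin n)).erase b = {a} := by
        rw [Finset.pair_comm, Finset.erase_insert (by simp [Ne.symm hab])]
      rw [Finset.sum_pair hab, hea, heb, Finset.prod_singleton, Finset.prod_singleton]
      set p := Real.sqrt (x a) with hp
      set q := Real.sqrt (x b) with hq
      have hppos : 0 < p := Real.sqrt_pos.mpr (hxpos a)
      have hqpos : 0 < q := Real.sqrt_pos.mpr (hxpos b)
      have hxa : x a = p * p := (Real.mul_self_sqrt (hxpos a).le).symm
      have hxb : x b = q * q := (Real.mul_self_sqrt (hxpos b).le).symm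
      have hsab : Real.sqrt (x a * x b) = p * q := Real.sqrt_mul (hxpos a).le _
      have hsba : Real.sqrt (x b * x a) = q * p := Real.sqrt_mul (hxpos b).le _
      rw [hsab, hsba, hxa, hxb]
      rw [div_add_div _ _ (by positivity) (by positivity), le_div_iff₀ (by positivity)]
      nlinarith [sq_nonneg (p - q), mul_pos hppos hqpos]
    have e3 : (∑ S ∈ (univ : Finset (Fin n)).powersetCard 2, (1:ℝ))
        = (n.choose 2 : ℝ) := by
      rw [Finset.sum_const, Finset.card_powersetCard, Finset.card_univ, Fintype.card_fin]
      simp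
    rw [e2]
    calc (1:ℝ) = (1 / (n.choose 2 : ℝ)) * (n.choose 2 : ℝ) := by field_simp
      _ ≤ _ := by
          refine mul_le_mul_of_nonneg_left ?_ (by positivity)
          rw [← e3]
          exact Finset.sum_le_sum hpair
  rw [hsplit]
  linarith
end

section
/- For any integer n ≥ 4 and any x = (x_1, …, x_n) with 0 < x_1 ≤ x_2 ≤ ⋯ ≤ x_n, x_{n−1} < x_n, and x_n ≥ 1, we have S_{n−1}(x) > 0. -/
open Finset

/-- `S_k(x) = ∑_{i=1}^{n-2} c_{n-i} e_{i-1}(x̂_{k,l}) − (n-2)! ∑_{i ≠ k,l} √x_i/(√x_k + √x_l)`,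
where `x̂_{k,l}` is `x` with the `k`-th and `l`-th coordinates removed (here `l` plays the role
of the last index `n`, and `e_{i-1}` is expressed by summing over subsets of `[n] \ {k, l}`). -/
noncomputable def Sfun (n : ℕ) (k l : Fin n) (x : Fin n → ℝ) : ℝ :=
  (∑ i ∈ Finset.Icc 1 (n - 2), (numDerangements (n - i) : ℝ) *
      ∑ S ∈ ((Finset.univ.erase k).erase l).powersetCard (i - 1), ∏ j ∈ S, x j)
    - ((n - 2).factorial : ℝ) *
        ∑ i ∈ (Finset.univ.erase k).erase l,
          Real.sqrt (x i) / (Real.sqrt (x k) + Real.sqrt (x l))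

lemma fact_le_three_der : ∀ m, 2 ≤ m → m.factorial ≤ 3 * numDerangements m := by
  have key : ∀ j, (j+2).factorial ≤ 3 * numDerangements (j+2) ∧
      (j+3).factorial ≤ 3 * numDerangements (j+3) := by
    intro j
    induction j with
    | zero => decide
    | succ i ih =>
      refine ⟨ih.2, ?_⟩
      have h := numDerangements_add_two (i+2)
      have hf : (i+4).factorial = (i+3) * ((i+2).factorial + (i+3).factorial) := by
        rw [Nat.factorial_succ, Nat.factorial_succ (i+2)]
        ring
      have : i + 1 + 3 = i + 2 + 2 := by ring
      rw [this, h, hf]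
      nlinarith [ih.1, ih.2]
  intro m hm
  obtain ⟨j, rfl⟩ : ∃ j, m = j + 2 := ⟨m - 2, by omega⟩
  exact (key j).1

lemma sqrt_ratio_lt (u v w : ℝ) (hu : 0 ≤ u) (huv : u ≤ v) (hw : 1 ≤ w) :
    Real.sqrt u / (Real.sqrt v + Real.sqrt w) < (1 + u) / 3 := by
  have hsu : (0:ℝ) ≤ Real.sqrt u := Real.sqrt_nonneg u
  have hsv : Real.sqrt u ≤ Real.sqrt v := Real.sqrt_le_sqrt huv
  have hsw : 1 ≤ Real.sqrt w := by
    rw [show (1:ℝ) = Real.sqrt 1 by simp]; exact Real.sqrt_le_sqrt hw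
  have hden : Real.sqrt u + 1 ≤ Real.sqrt v + Real.sqrt w := by linarith
  have hden0 : 0 < Real.sqrt u + 1 := by linarith
  have h1 : Real.sqrt u / (Real.sqrt v + Real.sqrt w) ≤ Real.sqrt u / (Real.sqrt u + 1) :=
    div_le_div_of_nonneg_left hsu (by linarith) hden |>.trans_eq rfl
  have h2 : Real.sqrt u / (Real.sqrt u + 1) < (1 + u) / 3 := by
    rw [div_lt_div_iff₀ hden0 (by norm_num)]
    have hu2 : Real.sqrt u ^ 2 = u := Real.sq_sqrt hu
    nlinarith [mul_nonneg hsu (sq_nonneg (Real.sqrt u - 1)), sq_nonneg (2 * Real.sqrt u - 1)]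
  linarith

/-- For `n ≥ 4` and `x` with `0 < x_1 ≤ x_2 ≤ ⋯ ≤ x_n`, `x_{n-1} < x_n` and
`x_n ≥ 1`, we have `S_{n-1}(x) > 0` (indices `n-1` and `n` of the paper correspond to the
`0`-indexed coordinates `n-2` and `n-1`). -/
theorem S_pred_pos (n : ℕ) (hn : 4 ≤ n) (x : Fin n → ℝ)
    (hpos : 0 < x ⟨0, by omega⟩) (hmono : Monotone x)
    (hlt : x ⟨n - 2, by omega⟩ < x ⟨n - 1, by omega⟩)
    (hge : 1 ≤ x ⟨n - 1, by omega⟩) :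
    0 < Sfun n ⟨n - 2, by omega⟩ ⟨n - 1, by omega⟩ x := by
  have hn0 : 0 < n := by omega
  set k : Fin n := ⟨n - 2, by omega⟩ with hk
  set l : Fin n := ⟨n - 1, by omega⟩ with hl
  set T : Finset (Fin n) := (Finset.univ.erase k).erase l with hT
  have hx : ∀ i : Fin n, 0 < x i := fun i =>
    lt_of_lt_of_le hpos (hmono (by exact Fin.mk_le_of_le_val (Nat.zero_le _)))
  have hkl : l ≠ k := by simp [hk, hl, Fin.ext_iff]; omega
  have hlmem : l ∈ Finset.univ.erase k := Finset.mem_erase.2 ⟨hkl, Finset.mem_univ _⟩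
  have hTcard : T.card = n - 2 := by
    rw [hT, Finset.card_erase_of_mem hlmem, Finset.card_erase_of_mem (Finset.mem_univ k),
      Finset.card_univ, Fintype.card_fin]
    omega
  set E : ℝ := ∑ i ∈ T, x i with hE
  have hE0 : 0 ≤ E := Finset.sum_nonneg fun i _ => (hx i).le
  set F : ℝ := ((n - 2).factorial : ℝ) with hF
  have hF0 : (0:ℝ) < F := by positivity
  -- bound on individual coordinates in T
  have hxk : ∀ i ∈ T, x i ≤ x k := by
    intro i hi
    rw [hT, Finset.mem_erase, Finset.mem_erase] at hi
    apply hmono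
    rw [Fin.le_def]
    have h1 : (i : ℕ) ≠ n - 1 := fun h => hi.1 (Fin.ext h)
    have h2 : (i : ℕ) ≠ n - 2 := fun h => hi.2.1 (Fin.ext h)
    have := i.isLt
    simp only [hk]
    omega
  -- R bound
  have hTne : T.Nonempty := Finset.card_pos.1 (by omega)
  have hR : ∑ i ∈ T, Real.sqrt (x i) / (Real.sqrt (x k) + Real.sqrt (x l))
      < (((n:ℝ) - 2) + E) / 3 := by
    have := Finset.sum_lt_sum_of_nonempty hTne
      (f := fun i => Real.sqrt (x i) / (Real.sqrt (x k) + Real.sqrt (x l)))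
      (g := fun i => (1 + x i) / 3)
      (fun i hi => sqrt_ratio_lt (x i) (x k) (x l) (hx i).le (hxk i hi) hge)
    calc _ < ∑ i ∈ T, (1 + x i) / 3 := this
      _ = ((T.card : ℝ) + E) / 3 := by
          rw [← Finset.sum_div, Finset.sum_add_distrib]
          simp [hE]
      _ = (((n:ℝ) - 2) + E) / 3 := by
          rw [hTcard]
          congr 1
          push_cast [Nat.cast_sub (by omega : 2 ≤ n)]
          ring
  -- A bound
  set A : ℝ := ∑ i ∈ Finset.Icc 1 (n - 2), (numDerangements (n - i) : ℝ) *
      ∑ S ∈ T.powersetCard (i - 1), ∏ j ∈ S, x j with hA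
  have hA1 : (numDerangements (n-1) : ℝ) + (numDerangements (n-2) : ℝ) * E ≤ A := by
    have hsub : ({1, 2} : Finset ℕ) ⊆ Finset.Icc 1 (n - 2) := by
      intro i hi
      fin_cases hi <;> simp <;> omega
    have hnn : ∀ i ∈ Finset.Icc 1 (n-2), i ∉ ({1,2} : Finset ℕ) →
        0 ≤ (numDerangements (n - i) : ℝ) * ∑ S ∈ T.powersetCard (i - 1), ∏ j ∈ S, x j := by
      intro i _ _
      apply mul_nonneg (by positivity)
      exact Finset.sum_nonneg fun S _ => Finset.prod_nonneg fun j _ => (hx j).le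
    have hle := Finset.sum_le_sum_of_subset_of_nonneg hsub hnn
    rw [Finset.sum_pair (by norm_num : (1:ℕ) ≠ 2)] at hle
    refine le_trans (le_of_eq ?_) hle
    congr 1
    · simp
    · rw [show (2:ℕ) - 1 = 1 from rfl, Finset.powersetCard_one, Finset.sum_map]
      simp [hE]
  -- derangement bounds
  have hd1 : ((n-1).factorial : ℝ) ≤ 3 * (numDerangements (n-1) : ℝ) := by
    exact_mod_cast fact_le_three_der (n-1) (by omega)
  have hd2 : ((n-2).factorial : ℝ) ≤ 3 * (numDerangements (n-2) : ℝ) := by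
    exact_mod_cast fact_le_three_der (n-2) (by omega)
  have hfact : ((n-1).factorial : ℝ) = ((n:ℝ) - 1) * F := by
    rw [hF, show n - 1 = (n - 2) + 1 by omega, Nat.factorial_succ]
    push_cast [Nat.cast_sub (by omega : 2 ≤ n)]
    ring
  have hSfun : Sfun n k l x = A - F * ∑ i ∈ T, Real.sqrt (x i) / (Real.sqrt (x k) + Real.sqrt (x l)) := rfl
  rw [hSfun]
  have hn2 : ((n:ℝ) - 2) ≥ 2 := by
    have : (4:ℝ) ≤ (n:ℝ) := by exact_mod_cast hn
    linarith
  nlinarith [mul_le_mul_of_nonneg_right hd2 hE0, mul_lt_mul_of_pos_left hR hF0]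
end
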